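/- arXiv:2009.10353 — 11 statements merged into one kernel-verified Lean document; each statement's English description precedes it below -/
import Mathlib

section
/- Let P be a finite set of n ≥ 1 points on the real line and S a finite set of closed bounded intervals of ℝ such that no endpoint of an interval of S coincides with a point of P, every point of P is contained in at least one interval of S, and distinct points of P have distinct codes with respect to S (the instance (P,S) is twin-free). Let S' ⊆ S be a set of intervals such that every interval of S' contains at least one point of P and every one of the n+1 gaps determined by P contains an endpoint of some interval of S'. Then there exists a discriminating code S'' for P with S' ⊆ S'' ⊆ S and |S''| ≤ 2·|S'|. -/
/-- A closed bounded interval of `ℝ` is represented by its pair of endpoints;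
a point `p` belongs to the interval `I` if `I.1 ≤ p ∧ p ≤ I.2`. -/
def memI (p : ℝ) (I : ℝ × ℝ) : Prop := I.1 ≤ p ∧ p ≤ I.2

/-- The code of a point `p` with respect to a finite set `S` of intervals:
the set of intervals of `S` containing `p`. -/
def code (S : Finset (ℝ × ℝ)) (p : ℝ) : Set (ℝ × ℝ) := {I | I ∈ S ∧ memI p I}

/-- `S` is a discriminating code for `P`: every point of `P` has a nonempty code and
distinct points of `P` have distinct codes. -/
def Discr (S : Finset (ℝ × ℝ)) (P : Finset ℝ) : Prop :=
  (∀ p ∈ P, (code S p).Nonempty) ∧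
    ∀ p ∈ P, ∀ q ∈ P, p ≠ q → code S p ≠ code S q

/-- `G` is one of the `n+1` gaps determined by the point set `P`:
either `(-∞, min P)`, or `(max P, ∞)`, or the open interval between two
consecutive points of `P`. -/
def IsGap (P : Finset ℝ) (G : Set ℝ) : Prop :=
  (∃ h : P.Nonempty, G = Set.Iio (P.min' h)) ∨
  (∃ h : P.Nonempty, G = Set.Ioi (P.max' h)) ∨
  (∃ p ∈ P, ∃ q ∈ P, p < q ∧ (∀ r ∈ P, ¬ (p < r ∧ r < q)) ∧ G = Set.Ioo p q)

/-- Every gap determined by `P` contains an endpoint of some interval of `S`. -/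
def GapsStabbed (P : Finset ℝ) (S : Finset (ℝ × ℝ)) : Prop :=
  ∀ G : Set ℝ, IsGap P G → ∃ I ∈ S, I.1 ∈ G ∨ I.2 ∈ G

/-!
Complete `S'` greedily: while two points of `P` share a code, add an interval of `S` separating
them. Each such interval raises the number of distinct codes on `P`, so at most
`|P| - #codes(S')` intervals are added, and one more covers the (at most one) point with empty
code. A point whose `S'`-code already occurs further left is charged to an interval of `S'` whose
right endpoint lies in the gap just left of that point; these intervals are distinct and differ
from an interval stabbing the leftmost gap, whence `|P| - #codes(S') < |S'|`.
-/

open Finset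

open scoped Classical

section Counting

variable {α β γ : Type*}

theorem Finset.card_image_lt_card_image_of_factor [DecidableEq β] [DecidableEq γ]
    {s : Finset α} {f : α → β} {g : α → γ} (h : γ → β) (hfg : ∀ x ∈ s, f x = h (g x))
    {p q : α} (hp : p ∈ s) (hq : q ∈ s) (hf : f p = f q) (hg : g p ≠ g q) :
    #(s.image f) < #(s.image g) := by
  have himage : s.image f = (s.image g).image h := by
    rw [image_image]; exact image_congr hfg
  rw [himage]
  refine lt_of_le_of_ne card_image_le fun hcard => hg ?_
  refine card_image_iff.1 hcard (mem_image_of_mem g hp) (mem_image_of_mem g hq) ?_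
  simpa only [hfg p hp, hfg q hq] using hf

theorem Finset.card_le_card_image_add_card_filter [LinearOrder α] [DecidableEq β]
    (s : Finset α) (f : α → β) :
    #s ≤ #(s.image f) + #(s.filter fun q => ∃ r ∈ s, r < q ∧ f r = f q) := by
  set t := s.filter fun q => ∃ r ∈ s, r < q ∧ f r = f q
  -- Among points with equal values of `f`, only the least one lies outside `t`.
  have hinj : Set.InjOn f ↑(s \ t) := by
    intro p hp q hq hpq
    simp only [coe_sdiff, Set.mem_sdiff, mem_coe, t, mem_filter, not_and, not_exists] at hp hq
    by_contra hne
    rcases lt_or_gt_of_ne hne with hlt | hlt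
    · exact hq.2 hq.1 p hp.1 hlt hpq
    · exact hp.2 hp.1 q hq.1 hlt hpq.symm
  have hmaps : ∀ x ∈ s \ t, f x ∈ s.image f := fun x hx => mem_image_of_mem f (sdiff_subset hx)
  have := card_le_card_of_injOn f hmaps hinj
  have := card_sdiff_add_card_inter s t
  have := card_le_card (inter_subset_right : s ∩ t ⊆ t)
  omega

end Counting

section Codes

variable {U V S : Finset (ℝ × ℝ)} {P : Finset ℝ}

theorem mem_code {I : ℝ × ℝ} {x : ℝ} : I ∈ code U x ↔ I ∈ U ∧ memI x I := Iff.rfl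

theorem code_inter_coe_of_subset (hUV : U ⊆ V) (x : ℝ) : code V x ∩ ↑U = code U x := by
  ext I
  simp only [Set.mem_inter_iff, mem_code, mem_coe]
  exact ⟨fun h => ⟨h.2, h.1.2⟩, fun h => ⟨⟨hUV h.1, h.2⟩, h.1⟩⟩

theorem code_eq_code_iff {p q : ℝ} :
    code U p = code U q ↔ ∀ J ∈ U, (memI p J ↔ memI q J) := by
  simp only [Set.ext_iff, mem_code, and_congr_right_iff]

theorem code_ne_code_iff {p q : ℝ} :
    code U p ≠ code U q ↔ ∃ J ∈ U, ¬(memI p J ↔ memI q J) := by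
  simp only [ne_eq, code_eq_code_iff, not_forall, exists_prop]

theorem Set.InjOn.code_of_subset (hUV : U ⊆ V) (h : Set.InjOn (code U) ↑P) :
    Set.InjOn (code V) ↑P := fun p hp q hq hpq => h hp hq <| by
  rw [← code_inter_coe_of_subset hUV, ← code_inter_coe_of_subset hUV, hpq]

theorem card_image_code_lt_card_image_code_insert {J : ℝ × ℝ} {p q : ℝ} (hp : p ∈ P)
    (hq : q ∈ P) (hpq : code U p = code U q) (hJ : ¬(memI p J ↔ memI q J)) :
    #(P.image (code U)) < #(P.image (code (insert J U))) :=
  card_image_lt_card_image_of_factor (· ∩ ↑U)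
    (fun x _ => (code_inter_coe_of_subset (subset_insert J U) x).symm) hp hq hpq
    (code_ne_code_iff.2 ⟨J, mem_insert_self J U, hJ⟩)

theorem exists_injOn_code_union (hS : Set.InjOn (code S) ↑P) (U : Finset (ℝ × ℝ)) :
    ∃ T ⊆ S, Set.InjOn (code (U ∪ T)) ↑P ∧ #T + #(P.image (code U)) ≤ #P := by
  by_cases hU : Set.InjOn (code U) ↑P
  · exact ⟨∅, empty_subset S, by simpa using hU, by simp [card_image_of_injOn hU]⟩
  obtain ⟨p, hp, q, hq, hpq, hne⟩ : ∃ p ∈ P, ∃ q ∈ P, code U p = code U q ∧ p ≠ q := by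
    simpa [Set.InjOn] using hU
  obtain ⟨J, hJS, hJ⟩ := code_ne_code_iff.1 fun h => hne (hS hp hq h)
  have hlt := card_image_code_lt_card_image_code_insert hp hq hpq hJ
  have hle : #(P.image (code (insert J U))) ≤ #P := card_image_le
  obtain ⟨T, hTS, hinj, hcard⟩ := exists_injOn_code_union hS (insert J U)
  refine ⟨insert J T, insert_subset hJS hTS, by rwa [union_insert, ← insert_union], ?_⟩
  have := card_insert_le J T
  omega
termination_by #P - #(P.image (code U))

theorem exists_discr_of_injOn (hUS : U ⊆ S) (hCov : ∀ p ∈ P, ∃ I ∈ S, memI p I)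
    (hinj : Set.InjOn (code U) ↑P) :
    ∃ V, U ⊆ V ∧ V ⊆ S ∧ Discr V P ∧ #V ≤ #U + 1 := by
  have hdistinct {V : Finset (ℝ × ℝ)} (hUV : U ⊆ V) :
      ∀ p ∈ P, ∀ q ∈ P, p ≠ q → code V p ≠ code V q :=
    fun p hp q hq hne h => hne (hinj.code_of_subset hUV hp hq h)
  by_cases hcov : ∀ p ∈ P, (code U p).Nonempty
  · exact ⟨U, subset_rfl, hUS, ⟨hcov, hdistinct subset_rfl⟩, Nat.le_succ _⟩
  obtain ⟨u, hu, hcode⟩ : ∃ u ∈ P, code U u = ∅ := by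
    simpa [Set.not_nonempty_iff_eq_empty] using hcov
  obtain ⟨K, hKS, hK⟩ := hCov u hu
  refine ⟨insert K U, subset_insert K U, insert_subset hKS hUS,
    ⟨fun p hp => ?_, hdistinct (subset_insert K U)⟩, card_insert_le K U⟩
  by_cases hpu : p = u
  · exact hpu ▸ ⟨K, mem_insert_self K U, hK⟩
  · obtain ⟨I, hIU, hI⟩ :=
      Set.nonempty_iff_ne_empty.2 fun h => hpu (hinj hp hu (h.trans hcode.symm))
    exact ⟨I, mem_insert_of_mem hIU, hI⟩

end Codes

section Gaps

variable {U : Finset (ℝ × ℝ)} {P : Finset ℝ}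

theorem exists_fst_lt_min' (hP : P.Nonempty) (hPt : ∀ I ∈ U, ∃ p ∈ P, memI p I)
    (hStab : GapsStabbed P U) : ∃ I ∈ U, I.1 < P.min' hP := by
  obtain ⟨I, hIU, hI⟩ := hStab _ (Or.inl ⟨hP, rfl⟩)
  refine ⟨I, hIU, hI.resolve_right fun h => ?_⟩
  obtain ⟨p, hp, hpI⟩ := hPt I hIU
  exact (P.min'_le p hp).not_gt (hpI.2.trans_lt h)

theorem exists_isGap_Ioo {q r : ℝ} (hq : q ∈ P) (hr : r ∈ P) (hrq : r < q) :
    ∃ m, m < q ∧ (∀ p ∈ P, p < q → p ≤ m) ∧ IsGap P (Set.Ioo m q) := by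
  have hne : (P.filter (· < q)).Nonempty := ⟨r, mem_filter.2 ⟨hr, hrq⟩⟩
  obtain ⟨hmP, hmq⟩ := mem_filter.1 ((P.filter (· < q)).max'_mem hne)
  have hle : ∀ p ∈ P, p < q → p ≤ (P.filter (· < q)).max' hne :=
    fun p hp hpq => le_max' _ p (mem_filter.2 ⟨hp, hpq⟩)
  exact ⟨_, hmq, hle,
    Or.inr <| Or.inr ⟨_, hmP, q, hq, hmq, fun s hs h => (hle s hs h.2).not_gt h.1, rfl⟩⟩

/-- If `r < q` have the same code, the endpoint stabbing the gap just left of `q` cannot be a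
left endpoint: that interval would contain `q` but not `r`. -/
theorem exists_snd_mem_gap_of_code_eq (hPt : ∀ I ∈ U, ∃ p ∈ P, memI p I)
    (hStab : GapsStabbed P U) {q r : ℝ} (hq : q ∈ P) (hr : r ∈ P) (hrq : r < q)
    (hcode : code U r = code U q) :
    ∃ I ∈ U, r < I.1 ∧ I.2 < q ∧ ∀ p ∈ P, p < q → p < I.2 := by
  obtain ⟨m, hmq, hle, hgap⟩ := exists_isGap_Ioo hq hr hrq
  obtain ⟨I, hIU, hI⟩ := hStab _ hgap
  have hrm := hle r hr hrq
  have hrI := code_eq_code_iff.1 hcode I hIU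
  rcases hI with ⟨hm1, hq1⟩ | ⟨hm2, hq2⟩
  · obtain ⟨p, hp, hpI⟩ := hPt I hIU
    have hqp : q ≤ p := not_lt.1 fun h => (hle p hp h).not_gt (hm1.trans_le hpI.1)
    exact absurd (hrI.2 ⟨hq1.le, hqp.trans hpI.2⟩).1 (not_le.2 (hrm.trans_lt hm1))
  · refine ⟨I, hIU, not_le.1 fun h => ?_, hq2, fun p hp hpq => (hle p hp hpq).trans_lt hm2⟩
    exact (hrI.1 ⟨h, hrm.trans hm2.le⟩).2.not_gt hq2

theorem card_filter_code_eq_lt_card (hP : P.Nonempty) (hPt : ∀ I ∈ U, ∃ p ∈ P, memI p I)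
    (hStab : GapsStabbed P U) :
    #(P.filter fun q => ∃ r ∈ P, r < q ∧ code U r = code U q) < #U := by
  set repeats := P.filter fun q => ∃ r ∈ P, r < q ∧ code U r = code U q
  obtain ⟨I₀, hI₀, hI₀min⟩ := exists_fst_lt_min' hP hPt hStab
  have hcharge : ∀ q ∈ repeats, ∃ I ∈ U.erase I₀, I.2 < q ∧ ∀ p ∈ P, p < q → p < I.2 := by
    intro q hq
    obtain ⟨hqP, r, hr, hrq, hcode⟩ := mem_filter.1 hq
    obtain ⟨I, hIU, hrI, hIq, hI⟩ := exists_snd_mem_gap_of_code_eq hPt hStab hqP hr hrq hcode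
    refine ⟨I, mem_erase.2 ⟨?_, hIU⟩, hIq, hI⟩
    rintro rfl
    exact lt_asymm (hI₀min.trans_le (P.min'_le r hr)) hrI
  choose! f hfU hf using hcharge
  have hinj : Set.InjOn f ↑repeats := by
    intro q hq q' hq' h
    by_contra hne
    wlog hlt : q < q' generalizing q q'
    · exact this hq' hq h.symm (Ne.symm hne) (lt_of_le_of_ne (not_lt.1 hlt) (Ne.symm hne))
    have hq'f := (hf q' hq').2 q (mem_filter.1 hq).1 hlt
    rw [← h] at hq'f
    exact (hf q hq).1.not_gt hq'f
  calc #repeats ≤ #(U.erase I₀) := card_le_card_of_injOn f hfU hinj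
    _ < #U := card_erase_lt_of_mem hI₀

end Gaps

theorem stmt0_general (P : Finset ℝ) (hP : P.Nonempty) (S S' : Finset (ℝ × ℝ))
    (hCov : ∀ p ∈ P, ∃ I ∈ S, memI p I)
    (hTF : ∀ p ∈ P, ∀ q ∈ P, p ≠ q → code S p ≠ code S q)
    (hSub : S' ⊆ S)
    (hPt : ∀ I ∈ S', ∃ p ∈ P, memI p I)
    (hStab : GapsStabbed P S') :
    ∃ S'' : Finset (ℝ × ℝ), S' ⊆ S'' ∧ S'' ⊆ S ∧ Discr S'' P ∧
      S''.card ≤ 2 * S'.card := by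
  have hS : Set.InjOn (code S) ↑P := fun p hp q hq h => by_contra fun hne => hTF p hp q hq hne h
  obtain ⟨T, hTS, hinj, hT⟩ := exists_injOn_code_union hS S'
  obtain ⟨S'', hsub, hS''S, hdiscr, hcard⟩ :=
    exists_discr_of_injOn (union_subset hSub hTS) hCov hinj
  have hclasses := card_le_card_image_add_card_filter P (code S')
  have hrepeats := card_filter_code_eq_lt_card hP hPt hStab
  have hunion := card_union_le S' T
  exact ⟨S'', subset_union_left.trans hsub, hS''S, hdiscr, by omega⟩

theorem stmt0 (P : Finset ℝ) (hP : P.Nonempty) (S S' : Finset (ℝ × ℝ))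
    (hIv : ∀ I ∈ S, I.1 ≤ I.2)
    (hEnd : ∀ I ∈ S, ∀ p ∈ P, I.1 ≠ p ∧ I.2 ≠ p)
    (hCov : ∀ p ∈ P, ∃ I ∈ S, memI p I)
    (hTF : ∀ p ∈ P, ∀ q ∈ P, p ≠ q → code S p ≠ code S q)
    (hSub : S' ⊆ S)
    (hPt : ∀ I ∈ S', ∃ p ∈ P, memI p I)
    (hStab : GapsStabbed P S') :
    ∃ S'' : Finset (ℝ × ℝ), S' ⊆ S'' ∧ S'' ⊆ S ∧ Discr S'' P ∧
      S''.card ≤ 2 * S'.card :=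
  stmt0_general P hP S S' hCov hTF hSub hPt hStab
end

section
/- Let P be a finite set of n ≥ 1 points on the real line and S* a finite set of closed bounded intervals of ℝ such that no endpoint of an interval of S* coincides with a point of P. If S* is a discriminating code for P, then every one of the n+1 gaps determined by P contains an endpoint of some interval of S*. -/
/-! An interval covering `min P` has its left endpoint in the leftmost gap, and symmetrically on
the right. For two points `p < q` of `P`, discrimination yields an interval containing exactly one
of them; since its endpoints avoid `p` and `q`, one of them lies strictly between `p` and `q`. -/

theorem exists_not_memI_iff_of_code_ne {S : Finset (ℝ × ℝ)} {p q : ℝ}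
    (h : code S p ≠ code S q) : ∃ I ∈ S, ¬(memI p I ↔ memI q I) := by
  by_contra! hpq
  exact h (Set.ext fun I => and_congr_right fun hI => hpq I hI)

theorem endpoint_mem_Ioo_of_not_memI_iff {p q : ℝ} {I : ℝ × ℝ} (hpq : p < q)
    (hp : I.2 ≠ p) (hq : I.1 ≠ q) (h : ¬(memI p I ↔ memI q I)) :
    I.1 ∈ Set.Ioo p q ∨ I.2 ∈ Set.Ioo p q := by
  unfold memI at h
  simp only [Set.mem_Ioo]
  grind

theorem stmt1_general (P : Finset ℝ) (S : Finset (ℝ × ℝ))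
    (hEnd : ∀ I ∈ S, ∀ p ∈ P, I.1 ≠ p ∧ I.2 ≠ p)
    (hDisc : Discr S P) :
    GapsStabbed P S := by
  rintro G (⟨h, rfl⟩ | ⟨h, rfl⟩ | ⟨p, hp, q, hq, hpq, -, rfl⟩)
  · obtain ⟨I, hIS, hI1, -⟩ := hDisc.1 _ (P.min'_mem h)
    exact ⟨I, hIS, Or.inl (hI1.lt_of_ne (hEnd I hIS _ (P.min'_mem h)).1)⟩
  · obtain ⟨I, hIS, -, hI2⟩ := hDisc.1 _ (P.max'_mem h)
    exact ⟨I, hIS, Or.inr (hI2.lt_of_ne' (hEnd I hIS _ (P.max'_mem h)).2)⟩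
  · obtain ⟨I, hIS, hI⟩ := exists_not_memI_iff_of_code_ne (hDisc.2 p hp q hq hpq.ne)
    exact ⟨I, hIS, endpoint_mem_Ioo_of_not_memI_iff hpq (hEnd I hIS p hp).2 (hEnd I hIS q hq).1 hI⟩

theorem stmt1 (P : Finset ℝ) (hP : P.Nonempty) (S : Finset (ℝ × ℝ))
    (hIv : ∀ I ∈ S, I.1 ≤ I.2)
    (hEnd : ∀ I ∈ S, ∀ p ∈ P, I.1 ≠ p ∧ I.2 ≠ p)
    (hDisc : Discr S P) :
    GapsStabbed P S :=
  stmt1_general P S hEnd hDisc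
end

section
/- Let P be a finite set of n ≥ 1 points on the real line and S' a finite set of closed bounded intervals of ℝ such that no endpoint of an interval of S' coincides with a point of P, every interval of S' contains at least one point of P, and every one of the n+1 gaps determined by P contains an endpoint of some interval of S'. Let c denote the number of distinct codes (including the empty code, if some point of P is uncovered) realized by the points of P with respect to S'. Then |S'| ≥ |P| − c + 1; equivalently, |S'| ≥ Σ (|Q| − 1) + 1, where the sum ranges over the equivalence classes Q of points of P having equal code with respect to S'. -/
/-!
Call a point of `P` *repeated* if some smaller point of `P` has the same code. Keeping the
least point of each code class shows that at most `c` points are not repeated. If `p` is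
repeated, with class-mate `q < p`, the gap just left of `p` cannot contain a left endpoint:
an interval starting there contains a point of `P`, hence `p`, but starts to the right of `q`.
So that gap contains a right endpoint, and so does the unbounded gap right of `max P`. Right
endpoints in distinct gaps belong to distinct intervals, whence `|S'| ≥ (|P| - c) + 1`.
-/

lemma card_le_card_filter_exists_lt_add_ncard_image {α β : Type*} [LinearOrder α]
    [DecidableEq β] (P : Finset α) (f : α → β) :
    P.card ≤ (P.filter fun p => ∃ q ∈ P, q < p ∧ f q = f p).card + (f '' P).ncard := by
  have hsplit := Finset.card_filter_add_card_filter_not (s := P) fun p => ∃ q ∈ P, q < p ∧ f q = f p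
  set M := P.filter fun p => ¬ ∃ q ∈ P, q < p ∧ f q = f p
  have hinj : Set.InjOn f M := by
    intro a ha b hb hab
    simp only [M, Finset.coe_filter, Set.mem_ofPred_eq, not_exists, not_and] at ha hb
    by_contra hne
    rcases lt_or_gt_of_ne hne with h | h
    · exact hb.2 a ha.1 h hab
    · exact ha.2 b hb.1 h hab.symm
  have hM : M.card ≤ (f '' P).ncard :=
    calc M.card = (f '' M).ncard := by rw [hinj.ncard_image, Set.ncard_coe_finset]
      _ ≤ (f '' P).ncard :=
        Set.ncard_le_ncard (Set.image_mono (Finset.coe_subset.mpr (Finset.filter_subset _ _)))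
          (P.finite_toSet.image f)
  omega

lemma exists_isGap_Ioo_of_lt {P : Finset ℝ} {p q : ℝ} (hp : p ∈ P) (hq : q ∈ P) (hqp : q < p) :
    ∃ m ∈ P, q ≤ m ∧ m < p ∧ (∀ r ∈ P, r < p → r ≤ m) ∧ IsGap P (Set.Ioo m p) := by
  classical
  have hne : (P.filter (· < p)).Nonempty := ⟨q, Finset.mem_filter.mpr ⟨hq, hqp⟩⟩
  obtain ⟨hmP, hmp⟩ := Finset.mem_filter.mp ((P.filter (· < p)).max'_mem hne)
  set m := (P.filter (· < p)).max' hne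
  have hmax : ∀ r ∈ P, r < p → r ≤ m := fun r hr hrp =>
    (P.filter (· < p)).le_max' r (Finset.mem_filter.mpr ⟨hr, hrp⟩)
  refine ⟨m, hmP, hmax q hq hqp, hmp, hmax, Or.inr (Or.inr ?_)⟩
  exact ⟨m, hmP, p, hp, hmp, fun r hr h => (hmax r hr h.2).not_gt h.1, rfl⟩

section Stabbed

variable {P : Finset ℝ} {S' : Finset (ℝ × ℝ)}

lemma exists_right_endpoint_between_of_code_eq
    (hEnd : ∀ I ∈ S', ∀ p ∈ P, I.1 ≠ p ∧ I.2 ≠ p) (hPt : ∀ I ∈ S', ∃ p ∈ P, memI p I)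
    (hStab : GapsStabbed P S') {p q : ℝ} (hp : p ∈ P) (hq : q ∈ P) (hqp : q < p)
    (hcode : code S' q = code S' p) :
    ∃ I ∈ S', I.2 < p ∧ ∀ r ∈ P, r < p → r < I.2 := by
  obtain ⟨m, -, hqm, -, hmax, hgap⟩ := exists_isGap_Ioo_of_lt hp hq hqp
  obtain ⟨I, hIS, hleft | hright⟩ := hStab _ hgap
  · obtain ⟨r, hr, hr1, hr2⟩ := hPt I hIS
    have hIr : I.1 < r := lt_of_le_of_ne hr1 (hEnd I hIS r hr).1
    have hpr : p ≤ r := not_lt.mp fun h => (hmax r hr h).not_gt (hleft.1.trans hIr)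
    have hIq : I ∈ code S' q := hcode ▸ ⟨hIS, hleft.2.le, hpr.trans hr2⟩
    exact absurd (hIq.2.1.trans hqm) (not_le.mpr hleft.1)
  · exact ⟨I, hIS, hright.2, fun r hr hrp => (hmax r hr hrp).trans_lt hright.1⟩

lemma exists_right_endpoint_gt_max' (hPt : ∀ I ∈ S', ∃ p ∈ P, memI p I)
    (hStab : GapsStabbed P S') (hP : P.Nonempty) :
    ∃ J ∈ S', P.max' hP < J.2 := by
  obtain ⟨J, hJS, hleft | hright⟩ := hStab _ (Or.inr (Or.inl ⟨hP, rfl⟩))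
  · obtain ⟨r, hr, hr1, -⟩ := hPt J hJS
    exact absurd ((P.le_max' r hr).trans_lt (Set.mem_Ioi.mp hleft)) (not_lt.mpr hr1)
  · exact ⟨J, hJS, hright⟩

end Stabbed

theorem stmt2_general (P : Finset ℝ) (hP : P.Nonempty) (S' : Finset (ℝ × ℝ))
    (hEnd : ∀ I ∈ S', ∀ p ∈ P, I.1 ≠ p ∧ I.2 ≠ p)
    (hPt : ∀ I ∈ S', ∃ p ∈ P, memI p I)
    (hStab : GapsStabbed P S') :
    P.card + 1 ≤ S'.card + (code S' '' (P : Set ℝ)).ncard := by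
  classical
  have hcount := card_le_card_filter_exists_lt_add_ncard_image P (code S')
  set D := P.filter fun p => ∃ q ∈ P, q < p ∧ code S' q = code S' p
  have hchoice : ∀ p ∈ D, ∃ I ∈ S', I.2 < p ∧ ∀ r ∈ P, r < p → r < I.2 := by
    intro p hp
    obtain ⟨hpP, q, hq, hqp, hcode⟩ := Finset.mem_filter.mp hp
    exact exists_right_endpoint_between_of_code_eq hEnd hPt hStab hpP hq hqp hcode
  choose! φ hφS hφlt hφsep using hchoice
  obtain ⟨J, hJS, hJ⟩ := exists_right_endpoint_gt_max' hPt hStab hP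
  have hφJ : ∀ p ∈ D, φ p ≠ J := fun p hp hEq =>
    ((hφlt p hp).trans_le (P.le_max' p (Finset.mem_filter.mp hp).1)).not_gt (hEq ▸ hJ)
  have hφinj : Set.InjOn φ D := by
    intro a ha b hb hab
    by_contra hne
    rcases lt_or_gt_of_ne hne with h | h
    · exact (hφlt a ha).not_gt (hab ▸ hφsep b hb a (Finset.mem_filter.mp ha).1 h)
    · exact (hφlt b hb).not_gt (hab ▸ hφsep a ha b (Finset.mem_filter.mp hb).1 h)
  have hD : D.card ≤ (S'.erase J).card := Finset.card_le_card_of_injOn φ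
    (fun p hp => Finset.mem_erase.mpr ⟨hφJ p hp, hφS p hp⟩) hφinj
  have := Finset.card_erase_add_one hJS
  omega

theorem stmt2 (P : Finset ℝ) (hP : P.Nonempty) (S' : Finset (ℝ × ℝ))
    (hIv : ∀ I ∈ S', I.1 ≤ I.2)
    (hEnd : ∀ I ∈ S', ∀ p ∈ P, I.1 ≠ p ∧ I.2 ≠ p)
    (hPt : ∀ I ∈ S', ∃ p ∈ P, memI p I)
    (hStab : GapsStabbed P S') :
    P.card + 1 ≤ S'.card + (code S' '' (P : Set ℝ)).ncard :=
  stmt2_general P hP S' hEnd hPt hStab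
end

section
/- Let P be a finite set of points on the real line and S' a finite set of closed intervals of ℝ, each of length exactly 1, such that no endpoint of an interval of S' coincides with a point of P and every point of P is contained in some interval of S'. Then S' discriminates every pair of distinct points of P if and only if S' discriminates every pair of consecutive points of P. -/
/-- `S` discriminates the pair of points `p, q`: some interval of `S`
contains exactly one of them. -/
def DiscrPair (S : Finset (ℝ × ℝ)) (p q : ℝ) : Prop :=
  ∃ I ∈ S, Xor' (memI p I) (memI q I)

theorem Finset.exists_consecutive_of_lt {α : Type*} [LinearOrder α] {P : Finset α}
    {p q : α} (hq : q ∈ P) (hpq : p < q) :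
    ∃ s ∈ P, p < s ∧ s ≤ q ∧ ∀ r ∈ P, ¬ (p < r ∧ r < s) := by
  have hne : (P.filter (p < ·)).Nonempty := ⟨q, Finset.mem_filter.mpr ⟨hq, hpq⟩⟩
  obtain ⟨hsP, hps⟩ := Finset.mem_filter.mp (Finset.min'_mem _ hne)
  refine ⟨_, hsP, hps, Finset.min'_le _ _ (Finset.mem_filter.mpr ⟨hq, hpq⟩), ?_⟩
  rintro r hr ⟨hpr, hrs⟩
  exact (Finset.min'_le _ _ (Finset.mem_filter.mpr ⟨hr, hpr⟩)).not_gt hrs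

theorem memI_of_le_of_le {a b x : ℝ} {I : ℝ × ℝ} (ha : memI a I) (hb : memI b I)
    (hax : a ≤ x) (hxb : x ≤ b) : memI x I :=
  ⟨ha.1.trans hax, hxb.trans hb.2⟩

theorem DiscrPair.symm {S : Finset (ℝ × ℝ)} {p q : ℝ} (h : DiscrPair S p q) :
    DiscrPair S q p :=
  let ⟨I, hI, hx⟩ := h
  ⟨I, hI, hx.symm⟩

theorem discrPair_of_add_one_lt {S : Finset (ℝ × ℝ)} {p q : ℝ} {J : ℝ × ℝ} (hJS : J ∈ S)
    (hJ : J.2 = J.1 + 1) (hpJ : memI p J) (hpq : p + 1 < q) : DiscrPair S p q :=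
  ⟨J, hJS, Or.inl ⟨hpJ, fun hqJ => by linarith [hpJ.1, hqJ.2]⟩⟩

/-- If an interval `I` separates `p` from some `s ∈ (p, q]` without separating `p` from `q`,
then either `I` contains `p` and `q`, hence `s`, or `I` lies strictly inside `(p, q)`; in the
latter case `q - p > 1`, and the unit interval covering `p` misses `q`. -/
theorem DiscrPair.of_lt_of_le {S : Finset (ℝ × ℝ)} (hUnit : ∀ I ∈ S, I.2 = I.1 + 1)
    {p s q : ℝ} (hCov : ∃ J ∈ S, memI p J) (hps : p < s) (hsq : s ≤ q)
    (h : DiscrPair S p s) : DiscrPair S p q := by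
  obtain ⟨I, hIS, ⟨hpI, hsI⟩ | ⟨hsI, hpI⟩⟩ := h
  · by_cases hqI : memI q I
    · exact absurd (memI_of_le_of_le hpI hqI hps.le hsq) hsI
    · exact ⟨I, hIS, Or.inl ⟨hpI, hqI⟩⟩
  · by_cases hqI : memI q I
    · exact ⟨I, hIS, Or.inr ⟨hqI, hpI⟩⟩
    have hpI1 : p < I.1 := by
      by_contra! hc
      exact hpI ⟨hc, hps.le.trans hsI.2⟩
    have hI2q : I.2 < q := by
      by_contra! hc
      exact hqI ⟨hsI.1.trans hsq, hc⟩
    obtain ⟨J, hJS, hpJ⟩ := hCov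
    exact discrPair_of_add_one_lt hJS (hUnit J hJS) hpJ (by linarith [hUnit I hIS])

theorem stmt3_general (P : Finset ℝ) (S' : Finset (ℝ × ℝ))
    (hUnit : ∀ I ∈ S', I.2 = I.1 + 1)
    (hCov : ∀ p ∈ P, ∃ I ∈ S', memI p I) :
    (∀ p ∈ P, ∀ q ∈ P, p ≠ q → DiscrPair S' p q) ↔
      (∀ p ∈ P, ∀ q ∈ P, p < q → (∀ r ∈ P, ¬ (p < r ∧ r < q)) →
        DiscrPair S' p q) := by
  refine ⟨fun h p hp q hq hpq _ => h p hp q hq hpq.ne, fun h => ?_⟩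
  have hlt : ∀ p ∈ P, ∀ q ∈ P, p < q → DiscrPair S' p q := by
    intro p hp q hq hpq
    obtain ⟨s, hsP, hps, hsq, hcons⟩ := Finset.exists_consecutive_of_lt hq hpq
    exact (h p hp s hsP hps hcons).of_lt_of_le hUnit (hCov p hp) hps hsq
  intro p hp q hq hne
  rcases hne.lt_or_gt with hpq | hqp
  · exact hlt p hp q hq hpq
  · exact (hlt q hq p hp hqp).symm

theorem stmt3 (P : Finset ℝ) (S' : Finset (ℝ × ℝ))
    (hUnit : ∀ I ∈ S', I.2 = I.1 + 1)
    (hEnd : ∀ I ∈ S', ∀ p ∈ P, I.1 ≠ p ∧ I.2 ≠ p)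
    (hCov : ∀ p ∈ P, ∃ I ∈ S', memI p I) :
    (∀ p ∈ P, ∀ q ∈ P, p ≠ q → DiscrPair S' p q) ↔
      (∀ p ∈ P, ∀ q ∈ P, p < q → (∀ r ∈ P, ¬ (p < r ∧ r < q)) →
        DiscrPair S' p q) :=
  stmt3_general P S' hUnit hCov
end

section
/- Let P be a finite set of n ≥ 1 points on the real line and S* a finite set of closed bounded intervals of ℝ such that no endpoint of an interval of S* coincides with a point of P. If S* is a discriminating code for P, then |S*| ≥ ⌈(n+1)/2⌉. -/
theorem stmt4 (P : Finset ℝ) (hP : P.Nonempty) (S : Finset (ℝ × ℝ))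
    (hIv : ∀ I ∈ S, I.1 ≤ I.2)
    (hEnd : ∀ I ∈ S, ∀ p ∈ P, I.1 ≠ p ∧ I.2 ≠ p)
    (hDisc : Discr S P) :
    P.card + 1 ≤ 2 * S.card := by
  classical
  set E : Finset ℝ := S.image Prod.fst ∪ S.image Prod.snd with hE
  have hEcard : E.card ≤ 2 * S.card := by
    calc E.card ≤ (S.image Prod.fst).card + (S.image Prod.snd).card :=
          Finset.card_union_le _ _
      _ ≤ S.card + S.card := by
          gcongr <;> exact Finset.card_image_le
      _ = 2 * S.card := (two_mul _).symm
  have hfstE : ∀ I ∈ S, I.1 ∈ E := fun I hI =>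
    Finset.mem_union_left _ (Finset.mem_image_of_mem _ hI)
  have hsndE : ∀ I ∈ S, I.2 ∈ E := fun I hI =>
    Finset.mem_union_right _ (Finset.mem_image_of_mem _ hI)
  -- For each p ∈ P, there is an endpoint e ∈ E with e < p and above all points of P below p.
  have hgood : ∀ p : ℝ, ∃ e : ℝ, p ∈ P →
      e ∈ E ∧ e < p ∧ ∀ r ∈ P, r < p → r < e := by
    intro p
    by_cases hp : p ∈ P
    swap
    · exact ⟨0, fun h => absurd h hp⟩
    by_cases hlt : ∃ r ∈ P, r < p
    · set F := P.filter (fun r => r < p) with hF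
      have hFne : F.Nonempty := by
        obtain ⟨r, hr, hrp⟩ := hlt
        exact ⟨r, by simp [hF, hr, hrp]⟩
      set q := F.max' hFne with hq
      have hqF : q ∈ F := F.max'_mem hFne
      have hqP : q ∈ P := (Finset.mem_filter.mp hqF).1
      have hqp : q < p := (Finset.mem_filter.mp hqF).2
      have hmax : ∀ r ∈ P, r < p → r ≤ q := fun r hr hrp =>
        F.le_max' r (by simp [hF, hr, hrp])
      have hne : code S p ≠ code S q := hDisc.2 p hp q hqP (ne_of_gt hqp)
      have hex : ∃ I : ℝ × ℝ, ¬ (I ∈ code S p ↔ I ∈ code S q) := by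
        by_contra h
        push_neg at h
        exact hne (Set.ext fun I => h I)
      obtain ⟨I, hI⟩ := hex
      by_cases hIp : I ∈ code S p
      · -- I contains p but not q : left endpoint of I is in (q, p)
        have hIq : I ∉ code S q := fun h => hI ⟨fun _ => h, fun _ => hIp⟩
        obtain ⟨hIS, h1, h2⟩ := hIp
        have hq2 : q ≤ I.2 := le_trans hqp.le h2
        have hq1 : q < I.1 := by
          by_contra h
          push_neg at h
          exact hIq ⟨hIS, h, hq2⟩
        have h1p : I.1 < p := lt_of_le_of_ne h1 ((hEnd I hIS p hp).1)
        exact ⟨I.1, fun _ => ⟨hfstE I hIS, h1p,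
          fun r hr hrp => lt_of_le_of_lt (hmax r hr hrp) hq1⟩⟩
      · -- I contains q but not p : right endpoint of I is in (q, p)
        have hIq : I ∈ code S q := by
          by_contra h
          exact hI ⟨fun h' => absurd h' hIp, fun h' => absurd h' h⟩
        obtain ⟨hIS, h1, h2⟩ := hIq
        have h2p : I.2 < p := by
          by_contra h
          push_neg at h
          exact hIp ⟨hIS, le_trans h1 hqp.le, h⟩
        have hq2 : q < I.2 := lt_of_le_of_ne h2 (Ne.symm (hEnd I hIS q hqP).2)
        exact ⟨I.2, fun _ => ⟨hsndE I hIS, h2p,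
          fun r hr hrp => lt_of_le_of_lt (hmax r hr hrp) hq2⟩⟩
    · -- p is the minimum of P
      push_neg at hlt
      obtain ⟨I, hIS, h1, h2⟩ := hDisc.1 p hp
      have h1p : I.1 < p := lt_of_le_of_ne h1 ((hEnd I hIS p hp).1)
      exact ⟨I.1, fun _ => ⟨hfstE I hIS, h1p,
        fun r hr hrp => absurd hrp (not_lt.mpr (hlt r hr))⟩⟩
  choose e he using hgood
  -- an endpoint above all points of P
  obtain ⟨J, hJS, hJ1, hJ2⟩ := hDisc.1 (P.max' hP) (P.max'_mem hP)
  set m := J.2 with hm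
  have hmE : m ∈ E := hsndE J hJS
  have hmgt : ∀ p ∈ P, p < m := by
    intro p hp
    have : P.max' hP < m :=
      lt_of_le_of_ne hJ2 (Ne.symm (hEnd J hJS _ (P.max'_mem hP)).2)
    exact lt_of_le_of_lt (P.le_max' p hp) this
  -- e is an injection from P into E.erase m
  have hinj : P.card ≤ (E.erase m).card := by
    apply Finset.card_le_card_of_injOn e
    · intro p hp
      obtain ⟨heE, hep, _⟩ := he p hp
      refine Finset.mem_erase.mpr ⟨?_, heE⟩
      exact ne_of_lt (lt_trans hep (hmgt p hp))
    · intro p hp q hq hpq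
      by_contra hne
      rcases lt_or_gt_of_ne hne with h | h
      · have h1 := (he p hp).2.1
        have h2 := (he q hq).2.2 p hp h
        rw [hpq] at h1
        exact absurd h1 (not_lt.mpr h2.le)
      · have h1 := (he q hq).2.1
        have h2 := (he p hp).2.2 q hq h
        rw [← hpq] at h1
        exact absurd h1 (not_lt.mpr h2.le)
  have herase : (E.erase m).card = E.card - 1 := Finset.card_erase_of_mem hmE
  have hE1 : 1 ≤ E.card := Finset.card_pos.mpr ⟨m, hmE⟩
  omega
end

section
/- Let I, J, K be closed bounded intervals of ℝ and p₁, p₂, p₃, p₄ points with p₁ ∈ I \ (J ∪ K), p₂ ∈ (I ∩ J) \ K, p₃ ∈ I ∩ J ∩ K, and p₄ ∈ (J ∩ K) \ I. Let S be a finite set of closed bounded intervals with {I, J, K} ⊆ S such that every interval of S \ {I, J, K} either contains all four points p₁, p₂, p₃, p₄ or contains none of them. Then every subset S* ⊆ S under which the four points p₁, p₂, p₃, p₄ have pairwise distinct codes satisfies {I, J, K} ⊆ S*. -/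
theorem stmt5 (I J K : ℝ × ℝ)
    (hI : I.1 ≤ I.2) (hJ : J.1 ≤ J.2) (hK : K.1 ≤ K.2)
    (p1 p2 p3 p4 : ℝ)
    (h1 : memI p1 I ∧ ¬ memI p1 J ∧ ¬ memI p1 K)
    (h2 : memI p2 I ∧ memI p2 J ∧ ¬ memI p2 K)
    (h3 : memI p3 I ∧ memI p3 J ∧ memI p3 K)
    (h4 : ¬ memI p4 I ∧ memI p4 J ∧ memI p4 K)
    (S : Finset (ℝ × ℝ)) (hS : ∀ A ∈ S, A.1 ≤ A.2)
    (hIS : I ∈ S) (hJS : J ∈ S) (hKS : K ∈ S)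
    (hOther : ∀ A ∈ S, A ≠ I → A ≠ J → A ≠ K →
      ((memI p1 A ∧ memI p2 A ∧ memI p3 A ∧ memI p4 A) ∨
        (¬ memI p1 A ∧ ¬ memI p2 A ∧ ¬ memI p3 A ∧ ¬ memI p4 A)))
    (S' : Finset (ℝ × ℝ)) (hsub : S' ⊆ S)
    (hDisc : ([p1, p2, p3, p4] : List ℝ).Pairwise
      (fun a b => code S' a ≠ code S' b)) :
    I ∈ S' ∧ J ∈ S' ∧ K ∈ S' := by
  obtain ⟨h1I, h1J, h1K⟩ := h1
  obtain ⟨h2I, h2J, h2K⟩ := h2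
  obtain ⟨h3I, h3J, h3K⟩ := h3
  obtain ⟨h4I, h4J, h4K⟩ := h4
  simp only [List.pairwise_cons, List.mem_cons, List.not_mem_nil, or_false,
    List.mem_singleton, forall_eq_or_imp, forall_eq, List.Pairwise.nil,
    and_true] at hDisc
  obtain ⟨⟨ne12, ne13, ne14⟩, ⟨ne23, ne24⟩, ne34, -⟩ := hDisc
  -- A general lemma: if X ∉ S' and a, b agree on membership in all intervals
  -- other than X, then their codes agree.
  have key : ∀ (a b : ℝ) (X : ℝ × ℝ), X ∉ S' →
      (∀ A ∈ S', A ≠ X → (memI a A ↔ memI b A)) → code S' a = code S' b := by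
    intro a b X hX hagree
    ext A
    simp only [code, Set.mem_setOf_eq]
    constructor <;> rintro ⟨hA, hm⟩ <;> refine ⟨hA, ?_⟩
    · have hne : A ≠ X := fun h => hX (h ▸ hA)
      exact (hagree A hA hne).mp hm
    · have hne : A ≠ X := fun h => hX (h ▸ hA)
      exact (hagree A hA hne).mpr hm
  refine ⟨?_, ?_, ?_⟩
  · -- I ∈ S' : otherwise codes of p3 and p4 coincide
    by_contra hI'
    apply ne34
    apply key p3 p4 I hI'
    intro A hA hne
    by_cases eJ : A = J
    · subst eJ; exact iff_of_true h3J h4J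
    by_cases eK : A = K
    · subst eK; exact iff_of_true h3K h4K
    rcases hOther A (hsub hA) hne eJ eK with ⟨_, _, ha3, ha4⟩ | ⟨_, _, ha3, ha4⟩
    · exact iff_of_true ha3 ha4
    · exact iff_of_false ha3 ha4
  · -- J ∈ S' : otherwise codes of p1 and p2 coincide
    by_contra hJ'
    apply ne12
    apply key p1 p2 J hJ'
    intro A hA hne
    by_cases eI : A = I
    · subst eI; exact iff_of_true h1I h2I
    by_cases eK : A = K
    · subst eK; exact iff_of_false h1K h2K
    rcases hOther A (hsub hA) eI hne eK with ⟨ha1, ha2, _, _⟩ | ⟨ha1, ha2, _, _⟩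
    · exact iff_of_true ha1 ha2
    · exact iff_of_false ha1 ha2
  · -- K ∈ S' : otherwise codes of p2 and p3 coincide
    by_contra hK'
    apply ne23
    apply key p2 p3 K hK'
    intro A hA hne
    by_cases eI : A = I
    · subst eI; exact iff_of_true h2I h3I
    by_cases eJ : A = J
    · subst eJ; exact iff_of_true h2J h3J
    rcases hOther A (hsub hA) eI eJ hne with ⟨_, ha2, ha3, _⟩ | ⟨_, ha2, ha3, _⟩
    · exact iff_of_true ha2 ha3
    · exact iff_of_false ha2 ha3
end

section
/- Let q₁ < q₂ < q₃ < q₄ < q₅ be five points on the real line, and consider six closed intervals: I⁰ with left endpoint in the open interval (q₁,q₂) and right endpoint in (q₃,q₄); Ī⁰ with left endpoint in (q₂,q₃) and right endpoint in (q₄,q₅); I¹ with left endpoint in (q₂,q₃) and right endpoint greater than q₅; I² with left endpoint in (q₄,q₅) and right endpoint greater than q₅; Ī¹ with left endpoint in (q₁,q₂) and right endpoint greater than q₅; Ī² with left endpoint in (q₃,q₄) and right endpoint greater than q₅. Then every subset T of these six intervals under which the five points q₁,…,q₅ have pairwise distinct codes satisfies |T| ≥ 3; moreover, if |T| = 3 then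 T contains at least one of I⁰ and Ī⁰. -/
/-!
Each code is a subset of `T`, so five distinct codes force `2 ^ |T| ≥ 5`, i.e. `|T| ≥ 3`.
If neither `I⁰` nor `Ī⁰` is used, every interval of `T` reaches beyond `q₅`, so the codes of
`q₁ < ⋯ < q₅` form a chain under inclusion; distinct members of a chain of subsets of `T` have
distinct cardinalities, which allows at most `|T| + 1` of them.
-/

noncomputable instance (p : ℝ) (I : ℝ × ℝ) : Decidable (memI p I) :=
  inferInstanceAs (Decidable (_ ∧ _))

noncomputable def codeFinset (T : Finset (ℝ × ℝ)) (p : ℝ) : Finset (ℝ × ℝ) :=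
  T.filter (memI p)

@[simp]
theorem coe_codeFinset (T : Finset (ℝ × ℝ)) (p : ℝ) : (codeFinset T p : Set (ℝ × ℝ)) = code T p := by
  ext I
  simp [codeFinset, code]

theorem codeFinset_ne_of_code_ne {T : Finset (ℝ × ℝ)} {p p' : ℝ} (h : code T p ≠ code T p') :
    codeFinset T p ≠ codeFinset T p' := fun hpp' => h (by rw [← coe_codeFinset, hpp', coe_codeFinset])

theorem length_le_two_pow_card_of_pairwise_code_ne {T : Finset (ℝ × ℝ)} {l : List ℝ}
    (hl : l.Pairwise (fun a b => code T a ≠ code T b)) : l.length ≤ 2 ^ T.card := by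
  have hnodup : (l.map (codeFinset T)).Nodup :=
    List.pairwise_map.2 (hl.imp codeFinset_ne_of_code_ne)
  calc l.length = (l.map (codeFinset T)).toFinset.card := by
        rw [List.toFinset_card_of_nodup hnodup, List.length_map]
    _ ≤ T.powerset.card := by
        refine Finset.card_le_card fun s hs => ?_
        obtain ⟨p, -, rfl⟩ := List.mem_map.1 (List.mem_toFinset.1 hs)
        exact Finset.mem_powerset.2 (Finset.filter_subset _ _)
    _ = 2 ^ T.card := Finset.card_powerset T

theorem codeFinset_subset_codeFinset {T : Finset (ℝ × ℝ)} {p p' : ℝ} (hpp' : p ≤ p')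
    (hp' : ∀ I ∈ T, p' ≤ I.2) : codeFinset T p ⊆ codeFinset T p' := by
  intro I hI
  simp only [codeFinset, Finset.mem_filter, memI] at hI ⊢
  exact ⟨hI.1, hI.2.1.trans hpp', hp' I hI.1⟩

theorem card_codeFinset_ne {T : Finset (ℝ × ℝ)} {p p' : ℝ} (h : code T p ≠ code T p')
    (hp : ∀ I ∈ T, p ≤ I.2) (hp' : ∀ I ∈ T, p' ≤ I.2) :
    (codeFinset T p).card ≠ (codeFinset T p').card := by
  have hne := codeFinset_ne_of_code_ne h
  rcases le_total p p' with hpp' | hp'p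
  · exact (Finset.card_lt_card ((codeFinset_subset_codeFinset hpp' hp').ssubset_of_ne hne)).ne
  · exact (Finset.card_lt_card ((codeFinset_subset_codeFinset hp'p hp).ssubset_of_ne hne.symm)).ne'

theorem length_le_card_add_one_of_pairwise_code_ne {T : Finset (ℝ × ℝ)} {l : List ℝ}
    (hl : l.Pairwise (fun a b => code T a ≠ code T b)) (hlT : ∀ p ∈ l, ∀ I ∈ T, p ≤ I.2) :
    l.length ≤ T.card + 1 := by
  have hnodup : (l.map fun p => (codeFinset T p).card).Nodup :=
    List.pairwise_map.2 <| hl.imp_of_mem fun ha hb h => card_codeFinset_ne h (hlT _ ha) (hlT _ hb)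
  calc l.length = (l.map fun p => (codeFinset T p).card).toFinset.card := by
        rw [List.toFinset_card_of_nodup hnodup, List.length_map]
    _ ≤ (Finset.range (T.card + 1)).card := by
        refine Finset.card_le_card fun n hn => ?_
        obtain ⟨p, -, rfl⟩ := List.mem_map.1 (List.mem_toFinset.1 hn)
        exact Finset.mem_range_succ_iff.2 (Finset.card_le_card (Finset.filter_subset _ _))
    _ = T.card + 1 := Finset.card_range _

theorem stmt6_general (q1 q2 q3 q4 q5 : ℝ)
    (h12 : q1 < q2) (h23 : q2 < q3) (h34 : q3 < q4) (h45 : q4 < q5)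
    (I0 Ib0 I1 I2 Ib1 Ib2 : ℝ × ℝ)
    (hI1 : I1.1 ∈ Set.Ioo q2 q3 ∧ q5 < I1.2)
    (hI2 : I2.1 ∈ Set.Ioo q4 q5 ∧ q5 < I2.2)
    (hIb1 : Ib1.1 ∈ Set.Ioo q1 q2 ∧ q5 < Ib1.2)
    (hIb2 : Ib2.1 ∈ Set.Ioo q3 q4 ∧ q5 < Ib2.2)
    (T : Finset (ℝ × ℝ))
    (hT : T ⊆ ({I0, Ib0, I1, I2, Ib1, Ib2} : Finset (ℝ × ℝ)))
    (hDisc : ([q1, q2, q3, q4, q5] : List ℝ).Pairwise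
      (fun a b => code T a ≠ code T b)) :
    3 ≤ T.card ∧ (T.card = 3 → I0 ∈ T ∨ Ib0 ∈ T) := by
  have hpow : 5 ≤ 2 ^ T.card := length_le_two_pow_card_of_pairwise_code_ne hDisc
  refine ⟨?_, fun hcard => ?_⟩
  · by_contra! hlt
    have := Nat.pow_le_pow_right two_pos (Nat.le_of_lt_succ hlt)
    omega
  by_contra! hno
  have hright : ∀ I ∈ T, q5 < I.2 := by
    intro I hI
    rcases Finset.mem_insert.1 (hT hI) with rfl | hI'
    · exact absurd hI hno.1
    simp only [Finset.mem_insert, Finset.mem_singleton] at hI'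
    rcases hI' with rfl | rfl | rfl | rfl | rfl
    exacts [absurd hI hno.2, hI1.2, hI2.2, hIb1.2, hIb2.2]
  have hchain : 5 ≤ T.card + 1 := by
    refine length_le_card_add_one_of_pairwise_code_ne hDisc fun p hp I hI => ?_
    have hp5 : p ≤ q5 := by
      simp only [List.mem_cons, List.not_mem_nil, or_false] at hp
      rcases hp with rfl | rfl | rfl | rfl | rfl <;> linarith
    exact hp5.trans (hright I hI).le
  omega

theorem stmt6 (q1 q2 q3 q4 q5 : ℝ)
    (h12 : q1 < q2) (h23 : q2 < q3) (h34 : q3 < q4) (h45 : q4 < q5)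
    (I0 Ib0 I1 I2 Ib1 Ib2 : ℝ × ℝ)
    (hI0 : I0.1 ∈ Set.Ioo q1 q2 ∧ I0.2 ∈ Set.Ioo q3 q4)
    (hIb0 : Ib0.1 ∈ Set.Ioo q2 q3 ∧ Ib0.2 ∈ Set.Ioo q4 q5)
    (hI1 : I1.1 ∈ Set.Ioo q2 q3 ∧ q5 < I1.2)
    (hI2 : I2.1 ∈ Set.Ioo q4 q5 ∧ q5 < I2.2)
    (hIb1 : Ib1.1 ∈ Set.Ioo q1 q2 ∧ q5 < Ib1.2)
    (hIb2 : Ib2.1 ∈ Set.Ioo q3 q4 ∧ q5 < Ib2.2)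
    (T : Finset (ℝ × ℝ))
    (hT : T ⊆ ({I0, Ib0, I1, I2, Ib1, Ib2} : Finset (ℝ × ℝ)))
    (hDisc : ([q1, q2, q3, q4, q5] : List ℝ).Pairwise
      (fun a b => code T a ≠ code T b)) :
    3 ≤ T.card ∧ (T.card = 3 → I0 ∈ T ∨ Ib0 ∈ T) :=
  stmt6_general q1 q2 q3 q4 q5 h12 h23 h34 h45 I0 Ib0 I1 I2 Ib1 Ib2 hI1 hI2 hIb1 hIb2 T hT hDisc
end

section
/- Let P be a finite set of points on the real line and S' a finite set of closed bounded intervals of ℝ. Let Q and Q' be nonempty disjoint subsets of P such that all points of Q have the same code C with respect to S', all points of Q' have the same code C' with respect to S', and C ≠ C'. Let I(Q) = [min Q, max Q] and I(Q') = [min Q', max Q']. Then either I(Q) and I(Q') are disjoint, or I(Q') is strictly contained in the open interval between two consecutive points of Q (i.e., there exist q < q' in Q with no point of Q strictly between them and I(Q') ⊂ (q, q')), or symmetrically I(Q) is strictly contained in the open interval between two consecutive points of Q'. -/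
theorem stmt8 (P : Finset ℝ) (S' : Finset (ℝ × ℝ)) (Q Q' : Finset ℝ)
    (hQP : Q ⊆ P) (hQ'P : Q' ⊆ P)
    (hQ : Q.Nonempty) (hQ' : Q'.Nonempty) (hdisj : Disjoint Q Q')
    (C C' : Set (ℝ × ℝ))
    (hC : ∀ p ∈ Q, code S' p = C) (hC' : ∀ p ∈ Q', code S' p = C')
    (hCC' : C ≠ C') :
    Disjoint (Set.Icc (Q.min' hQ) (Q.max' hQ))
        (Set.Icc (Q'.min' hQ') (Q'.max' hQ')) ∨
      (∃ a ∈ Q, ∃ b ∈ Q, a < b ∧ (∀ r ∈ Q, ¬ (a < r ∧ r < b)) ∧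
        Set.Icc (Q'.min' hQ') (Q'.max' hQ') ⊆ Set.Ioo a b) ∨
      (∃ a ∈ Q', ∃ b ∈ Q', a < b ∧ (∀ r ∈ Q', ¬ (a < r ∧ r < b)) ∧
        Set.Icc (Q.min' hQ) (Q.max' hQ) ⊆ Set.Ioo a b) := by
  -- sandwich: C ⊆ code of any point in I(Q), and symmetric
  have sand : ∀ (R : Finset ℝ) (hR : R.Nonempty) (D : Set (ℝ × ℝ)),
      (∀ p ∈ R, code S' p = D) →
      ∀ x : ℝ, x ∈ Set.Icc (R.min' hR) (R.max' hR) → D ⊆ code S' x := by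
    intro R hR D hD x hx I hI
    have h1 : I ∈ code S' (R.min' hR) := by rw [hD _ (R.min'_mem hR)]; exact hI
    have h2 : I ∈ code S' (R.max' hR) := by rw [hD _ (R.max'_mem hR)]; exact hI
    obtain ⟨hIS, hm1, hm2⟩ := h1
    obtain ⟨_, hM1, hM2⟩ := h2
    exact ⟨hIS, le_trans hm1 hx.1, le_trans hx.2 hM2⟩
  by_cases hB : ∃ q ∈ Q, q ∈ Set.Icc (Q'.min' hQ') (Q'.max' hQ')
  · by_cases hA : ∃ q' ∈ Q', q' ∈ Set.Icc (Q.min' hQ) (Q.max' hQ)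
    · exfalso
      obtain ⟨q, hqQ, hq⟩ := hB
      obtain ⟨q', hq'Q, hq'⟩ := hA
      apply hCC'
      apply le_antisymm
      · have := sand Q hQ C hC q' hq'
        rwa [hC' _ hq'Q] at this
      · have := sand Q' hQ' C' hC' q hq
        rwa [hC _ hqQ] at this
    · push_neg at hA
      have key : ∀ q' ∈ Q', q' < Q.min' hQ ∨ Q.max' hQ < q' := by
        intro q' hq'
        have := hA q' hq'
        simp only [Set.mem_Icc, not_and_or, not_le] at this
        rcases this with h | h
        · left; linarith
        · right; linarith
      set T1 := Q'.filter (fun q => q < Q.min' hQ) with hT1def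
      set T2 := Q'.filter (fun q => Q.max' hQ < q) with hT2def
      by_cases hT1 : T1.Nonempty
      · by_cases hT2 : T2.Nonempty
        · right; right
          set a := T1.max' hT1 with ha
          set b := T2.min' hT2 with hb
          have haT1 : a ∈ T1 := T1.max'_mem hT1
          have hbT2 : b ∈ T2 := T2.min'_mem hT2
          have haQ' : a ∈ Q' := (Finset.mem_filter.1 haT1).1
          have hbQ' : b ∈ Q' := (Finset.mem_filter.1 hbT2).1
          have ha' : a < Q.min' hQ := (Finset.mem_filter.1 haT1).2
          have hb' : Q.max' hQ < b := (Finset.mem_filter.1 hbT2).2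
          have hmM : Q.min' hQ ≤ Q.max' hQ := Q.min'_le _ (Q.max'_mem hQ)
          refine ⟨a, haQ', b, hbQ', by linarith, ?_, ?_⟩
          · intro r hr ⟨har, hrb⟩
            rcases key r hr with h | h
            · have : r ≤ a := T1.le_max' r (Finset.mem_filter.2 ⟨hr, h⟩)
              linarith
            · have : b ≤ r := T2.min'_le r (Finset.mem_filter.2 ⟨hr, h⟩)
              linarith
          · intro x hx
            exact ⟨lt_of_lt_of_le ha' hx.1, lt_of_le_of_lt hx.2 hb'⟩
        · -- all of Q' below min Q
          left
          rw [Set.disjoint_left]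
          intro x hx hx'
          have hM' : Q'.max' hQ' < Q.min' hQ := by
            rcases key _ (Q'.max'_mem hQ') with h | h
            · exact h
            · exact absurd ⟨Q'.max'_mem hQ', h⟩ (fun hh => hT2 ⟨_, Finset.mem_filter.2 hh⟩)
          have := hx.1; have := hx'.2
          linarith
      · -- all of Q' above max Q
        left
        rw [Set.disjoint_left]
        intro x hx hx'
        have hM' : Q.max' hQ < Q'.min' hQ' := by
          rcases key _ (Q'.min'_mem hQ') with h | h
          · exact absurd ⟨Q'.min'_mem hQ', h⟩ (fun hh => hT1 ⟨_, Finset.mem_filter.2 hh⟩)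
          · exact h
        have := hx.2; have := hx'.1
        linarith
  · -- no point of Q in I(Q'): middle disjunct or disjoint
    push_neg at hB
    have key : ∀ q ∈ Q, q < Q'.min' hQ' ∨ Q'.max' hQ' < q := by
      intro q hq
      have := hB q hq
      simp only [Set.mem_Icc, not_and_or, not_le] at this
      rcases this with h | h
      · left; linarith
      · right; linarith
    set T1 := Q.filter (fun q => q < Q'.min' hQ') with hT1def
    set T2 := Q.filter (fun q => Q'.max' hQ' < q) with hT2def
    by_cases hT1 : T1.Nonempty
    · by_cases hT2 : T2.Nonempty
      · right; left
        set a := T1.max' hT1 with ha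
        set b := T2.min' hT2 with hb
        have haT1 : a ∈ T1 := T1.max'_mem hT1
        have hbT2 : b ∈ T2 := T2.min'_mem hT2
        have haQ : a ∈ Q := (Finset.mem_filter.1 haT1).1
        have hbQ : b ∈ Q := (Finset.mem_filter.1 hbT2).1
        have ha' : a < Q'.min' hQ' := (Finset.mem_filter.1 haT1).2
        have hb' : Q'.max' hQ' < b := (Finset.mem_filter.1 hbT2).2
        have hmM : Q'.min' hQ' ≤ Q'.max' hQ' := Q'.min'_le _ (Q'.max'_mem hQ')
        refine ⟨a, haQ, b, hbQ, by linarith, ?_, ?_⟩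
        · intro r hr ⟨har, hrb⟩
          rcases key r hr with h | h
          · have : r ≤ a := T1.le_max' r (Finset.mem_filter.2 ⟨hr, h⟩)
            linarith
          · have : b ≤ r := T2.min'_le r (Finset.mem_filter.2 ⟨hr, h⟩)
            linarith
        · intro x hx
          exact ⟨lt_of_lt_of_le ha' hx.1, lt_of_le_of_lt hx.2 hb'⟩
      · left
        rw [Set.disjoint_left]
        intro x hx hx'
        have hM' : Q.max' hQ < Q'.min' hQ' := by
          rcases key _ (Q.max'_mem hQ) with h | h
          · exact h
          · exact absurd ⟨Q.max'_mem hQ, h⟩ (fun hh => hT2 ⟨_, Finset.mem_filter.2 hh⟩)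
        have := hx.2; have := hx'.1
        linarith
    · left
      rw [Set.disjoint_left]
      intro x hx hx'
      have hM' : Q'.max' hQ' < Q.min' hQ := by
        rcases key _ (Q.min'_mem hQ) with h | h
        · exact absurd ⟨Q.min'_mem hQ, h⟩ (fun hh => hT1 ⟨_, Finset.mem_filter.2 hh⟩)
        · exact h
      have := hx.1; have := hx'.2
      linarith
end

section
/- Let F be a finite family of subsets of a set X and Q a finite nonempty subset of X such that for every pair of distinct points p, q ∈ Q, some member of F contains exactly one of p and q. Then there exists a subfamily F' ⊆ F with |F'| ≤ |Q| − 1 such that for every pair of distinct points p, q ∈ Q, some member of F' contains exactly one of p and q. -/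
/-!
Pick a set `A ∈ F` separating two points of `Q`. It splits `Q` into the nonempty parts
`Q ∩ A` and `Q \ A`, each strictly smaller than `Q`. By induction each part is separated by
at most `|Q ∩ A| - 1`, resp. `|Q \ A| - 1`, members of `F`; adding `A`, which separates every
point of one part from every point of the other, gives at most `|Q| - 1` sets.
-/

namespace Finset

variable {X : Type*}

def Separates (F : Finset (Set X)) (Q : Finset X) : Prop :=
  ∀ p ∈ Q, ∀ q ∈ Q, p ≠ q → ∃ A ∈ F, Xor (p ∈ A) (q ∈ A)

theorem Separates.mono {F G : Finset (Set X)} {Q R : Finset X} (hFG : F ⊆ G) (hRQ : R ⊆ Q)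
    (h : Separates F Q) : Separates G R := fun p hp q hq hpq =>
  let ⟨A, hA, hxor⟩ := h p (hRQ hp) q (hRQ hq) hpq
  ⟨A, hFG hA, hxor⟩

theorem separates_of_card_le_one (F : Finset (Set X)) {Q : Finset X} (hQ : #Q ≤ 1) :
    Separates F Q := fun p hp q hq hpq =>
  absurd (card_le_one.mp hQ p hp q hq) hpq

theorem separates_insert_union_of_separates_filter [DecidableEq (Set X)]
    {F₁ F₂ : Finset (Set X)} {Q : Finset X} (A : Set X) [DecidablePred (· ∈ A)]
    (h₁ : Separates F₁ (Q.filter (· ∈ A))) (h₂ : Separates F₂ (Q.filter (· ∉ A))) :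
    Separates (insert A (F₁ ∪ F₂)) Q := by
  intro p hp q hq hpq
  by_cases hpA : p ∈ A <;> by_cases hqA : q ∈ A
  · obtain ⟨B, hB, hxor⟩ := h₁ p (mem_filter.2 ⟨hp, hpA⟩) q (mem_filter.2 ⟨hq, hqA⟩) hpq
    exact ⟨B, mem_insert_of_mem (mem_union_left _ hB), hxor⟩
  · exact ⟨A, mem_insert_self _ _, Or.inl ⟨hpA, hqA⟩⟩
  · exact ⟨A, mem_insert_self _ _, Or.inr ⟨hqA, hpA⟩⟩
  · obtain ⟨B, hB, hxor⟩ := h₂ p (mem_filter.2 ⟨hp, hpA⟩) q (mem_filter.2 ⟨hq, hqA⟩) hpq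
    exact ⟨B, mem_insert_of_mem (mem_union_right _ hB), hxor⟩

theorem Separates.exists_subset_card_le_card_sub_one {F : Finset (Set X)} {Q : Finset X}
    (h : Separates F Q) : ∃ F' ⊆ F, #F' ≤ #Q - 1 ∧ Separates F' Q := by
  classical
  induction Q using strongInduction with
  | H Q ih =>
    by_cases hQ : #Q ≤ 1
    · exact ⟨∅, empty_subset _, by simp, separates_of_card_le_one _ hQ⟩
    obtain ⟨p, hp, q, hq, hpq⟩ := one_lt_card.mp (not_le.mp hQ)
    obtain ⟨A, hA, hxor⟩ := h p hp q hq hpq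
    set Q₁ := Q.filter (· ∈ A)
    set Q₂ := Q.filter (· ∉ A)
    have hQ₁ : Q₁ ⊂ Q := filter_ssubset.2 <| by
      rcases hxor with ⟨-, h⟩ | ⟨-, h⟩
      exacts [⟨q, hq, h⟩, ⟨p, hp, h⟩]
    have hQ₂ : Q₂ ⊂ Q := filter_ssubset.2 <| by
      rcases hxor with ⟨h, -⟩ | ⟨h, -⟩
      exacts [⟨p, hp, not_not.2 h⟩, ⟨q, hq, not_not.2 h⟩]
    obtain ⟨F₁, hF₁, hcard₁, hsep₁⟩ := ih Q₁ hQ₁ (h.mono subset_rfl hQ₁.subset)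
    obtain ⟨F₂, hF₂, hcard₂, hsep₂⟩ := ih Q₂ hQ₂ (h.mono subset_rfl hQ₂.subset)
    refine ⟨insert A (F₁ ∪ F₂), insert_subset hA (union_subset hF₁ hF₂), ?_,
      separates_insert_union_of_separates_filter A hsep₁ hsep₂⟩
    have hsplit : #Q₁ + #Q₂ = #Q := card_filter_add_card_filter_not _
    have hlt₁ := card_lt_card hQ₁
    have hlt₂ := card_lt_card hQ₂
    calc #(insert A (F₁ ∪ F₂)) ≤ #F₁ + #F₂ + 1 :=
          (card_insert_le _ _).trans (Nat.add_le_add_right (card_union_le _ _) 1)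
      _ ≤ #Q - 1 := by omega

end Finset

theorem stmt11_general {X : Type*} (F : Finset (Set X)) (Q : Finset X)
    (hsep : ∀ p ∈ Q, ∀ q ∈ Q, p ≠ q → ∃ A ∈ F, Xor' (p ∈ A) (q ∈ A)) :
    ∃ F' ⊆ F, F'.card ≤ Q.card - 1 ∧
      ∀ p ∈ Q, ∀ q ∈ Q, p ≠ q → ∃ A ∈ F', Xor' (p ∈ A) (q ∈ A) :=
  Finset.Separates.exists_subset_card_le_card_sub_one hsep

theorem stmt11 {X : Type*} (F : Finset (Set X)) (Q : Finset X) (hQ : Q.Nonempty)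
    (hsep : ∀ p ∈ Q, ∀ q ∈ Q, p ≠ q → ∃ A ∈ F, Xor' (p ∈ A) (q ∈ A)) :
    ∃ F' ⊆ F, F'.card ≤ Q.card - 1 ∧
      ∀ p ∈ Q, ∀ q ∈ Q, p ≠ q → ∃ A ∈ F', Xor' (p ∈ A) (q ∈ A) :=
  stmt11_general F Q hsep
end

section
/- Let T : ℤ² → ℝ² be the map T(x,y) = (x − y, x + y). Then every axis-parallel closed unit square D in ℝ² (a closed ball of radius 1/2 in the ℓ∞ metric) contains at most two points of the image T(ℤ²); moreover, if D contains two distinct points T(u) and T(v) with u, v ∈ ℤ², then the Euclidean distance between u and v equals 1. -/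
/-- A point `p` belongs to the axis-parallel closed unit square centered at `c`
(the closed ball of radius `1/2` in the sup metric of `ℝ × ℝ`). -/
def inSq (p c : ℝ × ℝ) : Prop := dist p c ≤ 1 / 2

/-- The code of a point `p` with respect to a finite set `Φ` of axis-parallel
closed unit squares, given by their centers. -/
def sqCode (Φ : Finset (ℝ × ℝ)) (p : ℝ × ℝ) : Set (ℝ × ℝ) :=
  {c | c ∈ Φ ∧ inSq p c}

/-- The map `T(x, y) = (x - y, x + y)` (rotation by `π/4` and scaling by `√2`). -/
def Tmap (u : ℤ × ℤ) : ℝ × ℝ := ((u.1 : ℝ) - (u.2 : ℝ), (u.1 : ℝ) + (u.2 : ℝ))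

/-- Euclidean distance between two points of `ℤ²`. -/
noncomputable def eucDist (u v : ℤ × ℤ) : ℝ :=
  Real.sqrt (((u.1 - v.1 : ℤ) : ℝ) ^ 2 + ((u.2 - v.2 : ℤ) : ℝ) ^ 2)

lemma Tmap_inj {u v : ℤ × ℤ} (h : Tmap u = Tmap v) : u = v := by
  simp only [Tmap, Prod.mk.injEq] at h
  have h1 : u.1 - u.2 = v.1 - v.2 := by exact_mod_cast h.1
  have h2 : u.1 + u.2 = v.1 + v.2 := by exact_mod_cast h.2
  have : u.1 = v.1 ∧ u.2 = v.2 := ⟨by omega, by omega⟩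
  exact Prod.ext this.1 this.2

lemma key {u v : ℤ × ℤ} {c : ℝ × ℝ} (hu : inSq (Tmap u) c) (hv : inSq (Tmap v) c) :
    (u.1 - v.1) ^ 2 + (u.2 - v.2) ^ 2 ≤ 1 := by
  have hd : dist (Tmap u) (Tmap v) ≤ 1 := by
    calc dist (Tmap u) (Tmap v) ≤ dist (Tmap u) c + dist c (Tmap v) := dist_triangle _ _ _
    _ ≤ 1 / 2 + 1 / 2 := add_le_add hu (by rwa [dist_comm])
    _ = 1 := by norm_num
  rw [Prod.dist_eq, max_le_iff, Real.dist_eq, Real.dist_eq] at hd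
  obtain ⟨h1, h2⟩ := hd
  rw [abs_le] at h1 h2
  simp only [Tmap] at h1 h2
  have h1a : (-1 : ℝ) ≤ (((u.1 - v.1) - (u.2 - v.2) : ℤ) : ℝ) := by push_cast; linarith [h1.1]
  have h1b : (((u.1 - v.1) - (u.2 - v.2) : ℤ) : ℝ) ≤ 1 := by push_cast; linarith [h1.2]
  have h2a : (-1 : ℝ) ≤ (((u.1 - v.1) + (u.2 - v.2) : ℤ) : ℝ) := by push_cast; linarith [h2.1]
  have h2b : (((u.1 - v.1) + (u.2 - v.2) : ℤ) : ℝ) ≤ 1 := by push_cast; linarith [h2.2]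
  have i1a : (-1 : ℤ) ≤ (u.1 - v.1) - (u.2 - v.2) := by exact_mod_cast h1a
  have i1b : (u.1 - v.1) - (u.2 - v.2) ≤ 1 := by exact_mod_cast h1b
  have i2a : (-1 : ℤ) ≤ (u.1 - v.1) + (u.2 - v.2) := by exact_mod_cast h2a
  have i2b : (u.1 - v.1) + (u.2 - v.2) ≤ 1 := by exact_mod_cast h2b
  nlinarith [i1a, i1b, i2a, i2b]

lemma sqsum {a b : ℤ} (h : a ^ 2 + b ^ 2 ≤ 1) (hne : ¬(a = 0 ∧ b = 0)) :
    a ^ 2 + b ^ 2 = 1 := by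
  have ha : -1 ≤ a ∧ a ≤ 1 := by constructor <;> nlinarith [sq_nonneg a, sq_nonneg b]
  have hb : -1 ≤ b ∧ b ≤ 1 := by constructor <;> nlinarith [sq_nonneg a, sq_nonneg b]
  obtain ⟨ha1, ha2⟩ := ha
  obtain ⟨hb1, hb2⟩ := hb
  interval_cases a <;> interval_cases b <;> simp_all

lemma key_eq {u v : ℤ × ℤ} {c : ℝ × ℝ} (hu : inSq (Tmap u) c) (hv : inSq (Tmap v) c)
    (hne : u ≠ v) : (u.1 - v.1) ^ 2 + (u.2 - v.2) ^ 2 = 1 := by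
  apply sqsum (key hu hv)
  intro ⟨h1, h2⟩
  exact hne (Prod.ext (by omega) (by omega))

theorem stmt14 (c : ℝ × ℝ) :
    (∀ u v w : ℤ × ℤ, inSq (Tmap u) c → inSq (Tmap v) c → inSq (Tmap w) c →
      Tmap u = Tmap v ∨ Tmap u = Tmap w ∨ Tmap v = Tmap w) ∧
    (∀ u v : ℤ × ℤ, inSq (Tmap u) c → inSq (Tmap v) c → Tmap u ≠ Tmap v →
      eucDist u v = 1) := by
  constructor
  · intro u v w hu hv hw
    by_contra hcon
    push_neg at hcon
    obtain ⟨huv, huw, hvw⟩ := hcon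
    have nuv : u ≠ v := fun h => huv (by rw [h])
    have nuw : u ≠ w := fun h => huw (by rw [h])
    have nvw : v ≠ w := fun h => hvw (by rw [h])
    have e1 := key_eq hu hv nuv
    have e2 := key_eq hv hw nvw
    have e3 := key_eq hu hw nuw
    set a := u.1 - v.1
    set b := u.2 - v.2
    set p := v.1 - w.1
    set q := v.2 - w.2
    have h3 : (a + p) ^ 2 + (b + q) ^ 2 = 1 := by
      have : u.1 - w.1 = a + p := by omega
      have h2 : u.2 - w.2 = b + q := by omega
      rw [← this, ← h2]; exact e3
    have hk : 2 * (a * p + b * q) = -1 := by nlinarith [e1, e2, h3]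
    omega
  · intro u v hu hv hne
    have nuv : u ≠ v := fun h => hne (by rw [h])
    have e := key_eq hu hv nuv
    unfold eucDist
    have : (((u.1 - v.1 : ℤ) : ℝ) ^ 2 + ((u.2 - v.2 : ℤ) : ℝ) ^ 2) = 1 := by
      exact_mod_cast e
    rw [this, Real.sqrt_one]
end

section
/- Let T : ℤ² → ℝ² be the map T(x,y) = (x − y, x + y), and let u, v, w ∈ ℤ² with u ≠ w such that the Euclidean distances satisfy ‖u − v‖ = 1 and ‖v − w‖ = 1. Let D₁ be the axis-parallel closed unit square centered at (T(u) + T(v))/2 and D₂ the axis-parallel closed unit square centered at (T(v) + T(w))/2. Then {D₁, D₂} is a discriminating code for the three points T(u), T(v), T(w): T(u) lies in D₁ only, T(w) lies in D₂ only, and T(v) lies in both D₁ and D₂. -/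
/-!
`T` is additive and sends the four unit steps of `ℤ²` to the four diagonal steps `(±1, ±1)`, whose
sup-length is `1`; so the unit square centred at the midpoint of a step contains both endpoints.
The steps `T(u) - T(v)` and `T(w) - T(v)` are distinct diagonal steps, hence opposite in some
coordinate, and in that coordinate `T(u)` lies at distance `3/2` from the centre of `D₂`
(symmetrically for `T(w)` and `D₁`).
-/

lemma Int.abs_sub_eq_one_and_abs_add_eq_one {a b : ℤ} (h : a ^ 2 + b ^ 2 = 1) :
    |a - b| = 1 ∧ |a + b| = 1 := by
  have ha : |a| ≤ 1 := abs_le.mpr ⟨by nlinarith [sq_nonneg b], by nlinarith [sq_nonneg b]⟩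
  have hb : |b| ≤ 1 := abs_le.mpr ⟨by nlinarith [sq_nonneg a], by nlinarith [sq_nonneg a]⟩
  rw [abs_le] at ha hb
  obtain ⟨ha₀, ha₁⟩ := ha
  obtain ⟨hb₀, hb₁⟩ := hb
  interval_cases a <;> interval_cases b <;> simp_all

lemma eucDist_comm (u v : ℤ × ℤ) : eucDist u v = eucDist v u := by
  unfold eucDist
  congr 1
  push_cast
  ring

lemma eucDist_eq_one_iff {u v : ℤ × ℤ} :
    eucDist u v = 1 ↔ (u.1 - v.1) ^ 2 + (u.2 - v.2) ^ 2 = 1 := by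
  rw [eucDist, Real.sqrt_eq_one]
  exact_mod_cast Iff.rfl

lemma Tmap_injective : Function.Injective Tmap := by
  intro u w h
  simp only [Tmap, Prod.mk.injEq] at h
  obtain ⟨h₁, h₂⟩ := h
  have e₁ : (u.1 : ℝ) = w.1 := by linarith
  have e₂ : (u.2 : ℝ) = w.2 := by linarith
  exact Prod.ext (by exact_mod_cast e₁) (by exact_mod_cast e₂)

lemma abs_Tmap_sub_eq_one {u v : ℤ × ℤ} (h : eucDist u v = 1) :
    |(Tmap u).1 - (Tmap v).1| = 1 ∧ |(Tmap u).2 - (Tmap v).2| = 1 := by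
  obtain ⟨h₁, h₂⟩ := Int.abs_sub_eq_one_and_abs_add_eq_one (eucDist_eq_one_iff.mp h)
  have e₁ : (Tmap u).1 - (Tmap v).1 = (((u.1 - v.1) - (u.2 - v.2) : ℤ) : ℝ) := by
    simp only [Tmap]; push_cast; ring
  have e₂ : (Tmap u).2 - (Tmap v).2 = (((u.1 - v.1) + (u.2 - v.2) : ℤ) : ℝ) := by
    simp only [Tmap]; push_cast; ring
  rw [e₁, e₂, ← Int.cast_abs, ← Int.cast_abs, h₁, h₂]
  norm_num

lemma dist_eq_one_of_abs_sub_eq_one {p q : ℝ × ℝ}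
    (h : |p.1 - q.1| = 1 ∧ |p.2 - q.2| = 1) : dist p q = 1 := by
  rw [Prod.dist_eq, Real.dist_eq, Real.dist_eq, h.1, h.2, max_self]

lemma inSq_midpoint_left_iff {p q : ℝ × ℝ} : inSq p (midpoint ℝ p q) ↔ dist p q ≤ 1 := by
  rw [inSq, dist_left_midpoint]
  constructor <;> intro h <;> norm_num at h ⊢ <;> linarith

lemma inSq_midpoint_right_iff {p q : ℝ × ℝ} : inSq q (midpoint ℝ p q) ↔ dist p q ≤ 1 := by
  rw [midpoint_comm, inSq_midpoint_left_iff, dist_comm]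

lemma inSq_iff {p c : ℝ × ℝ} : inSq p c ↔ |p.1 - c.1| ≤ 1 / 2 ∧ |p.2 - c.2| ≤ 1 / 2 := by
  rw [inSq, Prod.dist_eq, Real.dist_eq, Real.dist_eq, max_le_iff]

lemma abs_sub_midpoint_eq_three_halves {x y z : ℝ} (hx : |x - y| = 1) (hz : |z - y| = 1)
    (hxz : x ≠ z) : |x - (y + z) / 2| = 3 / 2 := by
  have hopp : z - y = -(x - y) :=
    (abs_eq_abs.mp (hz.trans hx.symm)).resolve_left fun h => hxz (by linarith)
  calc |x - (y + z) / 2| = |3 / 2 * (x - y)| := by congr 1; linarith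
    _ = 3 / 2 := by rw [abs_mul, hx]; norm_num

lemma not_inSq_midpoint_of_ne {p q r : ℝ × ℝ} (hp : |p.1 - q.1| = 1 ∧ |p.2 - q.2| = 1)
    (hr : |r.1 - q.1| = 1 ∧ |r.2 - q.2| = 1) (hpr : p ≠ r) : ¬ inSq p (midpoint ℝ q r) := by
  have hmid : midpoint ℝ q r = ((q.1 + r.1) / 2, (q.2 + r.2) / 2) := by
    ext <;> simp [midpoint_eq_smul_add] <;> ring
  rw [inSq_iff, hmid, not_and_or, not_le, not_le]
  rcases not_and_or.mp (mt Prod.ext_iff.mpr hpr) with h | h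
  · left; rw [abs_sub_midpoint_eq_three_halves hp.1 hr.1 h]; norm_num
  · right; rw [abs_sub_midpoint_eq_three_halves hp.2 hr.2 h]; norm_num

theorem stmt15 (u v w : ℤ × ℤ) (huw : u ≠ w)
    (huv : eucDist u v = 1) (hvw : eucDist v w = 1) :
    inSq (Tmap u) (midpoint ℝ (Tmap u) (Tmap v)) ∧
    ¬ inSq (Tmap u) (midpoint ℝ (Tmap v) (Tmap w)) ∧
    inSq (Tmap w) (midpoint ℝ (Tmap v) (Tmap w)) ∧
    ¬ inSq (Tmap w) (midpoint ℝ (Tmap u) (Tmap v)) ∧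
    inSq (Tmap v) (midpoint ℝ (Tmap u) (Tmap v)) ∧
    inSq (Tmap v) (midpoint ℝ (Tmap v) (Tmap w)) := by
  have hu := abs_Tmap_sub_eq_one huv
  have hw := abs_Tmap_sub_eq_one ((eucDist_comm v w).symm ▸ hvw)
  have hTuv : dist (Tmap u) (Tmap v) ≤ 1 := (dist_eq_one_of_abs_sub_eq_one hu).le
  have hTvw : dist (Tmap v) (Tmap w) ≤ 1 := by
    rw [dist_comm]; exact (dist_eq_one_of_abs_sub_eq_one hw).le
  have hTuw : Tmap u ≠ Tmap w := Tmap_injective.ne huw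
  refine ⟨inSq_midpoint_left_iff.mpr hTuv, not_inSq_midpoint_of_ne hu hw hTuw,
    inSq_midpoint_right_iff.mpr hTvw, ?_, inSq_midpoint_right_iff.mpr hTuv,
    inSq_midpoint_left_iff.mpr hTvw⟩
  rw [midpoint_comm]
  exact not_inSq_midpoint_of_ne hw hu hTuw.symm
end
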